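/- arXiv:1904.01858 — 3 statements merged into one kernel-verified Lean document; each statement's English description precedes it below -/
import Mathlib

section
/- Let G be a finite abelian group and H a proper subgroup of G. Then H is a perfect code of G if and only if H₂ is a perfect code of the group G₂. -/
/-- The Cayley graph of a group `G` with connection set `S`: distinct vertices `x`, `y`
are adjacent iff `y * x⁻¹ ∈ S` (for inverse-closed `S` this relation is symmetric). -/
def cayley (G : Type*) [Group G] (S : Set G) : SimpleGraph G :=
  SimpleGraph.fromRel (fun x y => y * x⁻¹ ∈ S)

/-- `C` is a perfect code in the graph `Γ`: `C` is an independent set and every vertex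
outside `C` is adjacent to exactly one vertex of `C`. -/
def IsPerfectCode {V : Type*} (Γ : SimpleGraph V) (C : Set V) : Prop :=
  (∀ u ∈ C, ∀ v ∈ C, ¬ Γ.Adj u v) ∧ ∀ v ∉ C, ∃! u, u ∈ C ∧ Γ.Adj v u

/-- `C` is a perfect code of the group `G`: there is an inverse-closed `S ⊆ G` with
`1 ∉ S` such that `C` is a perfect code in `Cay(G, S)`. -/
def IsPerfectCodeOfGroup (G : Type*) [Group G] (C : Set G) : Prop :=
  ∃ S : Set G, S⁻¹ = S ∧ (1 : G) ∉ S ∧ IsPerfectCode (cayley G S) C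

/-- The Sylow `2`-subgroup of a finite abelian group: the subgroup of all elements
whose order is a power of `2`. -/
def sylowTwo (G : Type*) [CommGroup G] : Subgroup G :=
  haveI : Fact (Nat.Prime 2) := ⟨Nat.prime_two⟩
  CommGroup.primaryComponent G 2

/-! For a normal subgroup `H`, being a perfect code means that every involution of `G ⧸ H`
lifts to an element `x` of `G` with `x ^ 2 = 1`. Necessity: an element `s` of the connection
set with `s ^ 2 ∈ H` is adjacent to both `1` and `s ^ 2`, so `s ^ 2 = 1`. Sufficiency: the
non-trivial elements of a transversal of `H` that is closed under inversion form a connection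
set. The lifting condition only involves `2`-elements, because some odd power
`g ^ (2k+1) = g * (g ^ 2) ^ k` of `g` lies in `G₂`, and in the coset `g H` when `g ^ 2 ∈ H`. -/

section

variable {G : Type*}

theorem Function.Involutive.exists_equivariant_section {α β : Type*} {ι : α → α} {j : β → β}
    (hι : Function.Involutive ι) (hj : Function.Involutive j) (p : β → α)
    (hp : ∀ b, p (j b) = ι (p b)) (hpre : ∀ a, ∃ b, p b = a ∧ (ι a = a → j b = b)) :
    ∃ f : α → β, (∀ a, p (f a) = a) ∧ ∀ a, f (ι a) = j (f a) := by
  classical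
  choose g hpg hgj using hpre
  let : LinearOrder α := WellOrderingRel.isWellOrder.linearOrder
  -- Pick a preimage on one point of each `ι`-orbit and transport it to the other by `j`.
  refine ⟨fun a => if a ≤ ι a then g a else j (g (ι a)), fun a => ?_, fun a => ?_⟩
  · dsimp only
    split_ifs
    · exact hpg a
    · rw [hp, hpg, hι]
  · dsimp only
    rw [hι a]
    rcases lt_trichotomy a (ι a) with h | h | h
    · simp [h.le, h.not_ge]
    · rw [← h, if_pos le_rfl, hgj a h.symm]
    · simp [h.le, h.not_ge, hj (g (ι a))]

section Cayley

variable [Group G] {S : Set G}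

theorem cayley_adj_iff (hS : S⁻¹ = S) (h1 : (1 : G) ∉ S) {x y : G} :
    (cayley G S).Adj x y ↔ y * x⁻¹ ∈ S := by
  rw [cayley, SimpleGraph.fromRel_adj]
  refine ⟨fun ⟨_, h⟩ => h.elim id fun h' => ?_, fun h => ⟨?_, Or.inl h⟩⟩
  · rw [← hS]
    simpa using h'
  · rintro rfl
    exact h1 (by simpa using h)

theorem IsPerfectCode.sq_eq_one_of_sq_mem (hS : S⁻¹ = S) (h1 : (1 : G) ∉ S) {H : Subgroup G}
    (hC : IsPerfectCode (cayley G S) H) {s : G} (hs : s ∈ S) (hs2 : s ^ 2 ∈ H) : s ^ 2 = 1 := by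
  have hsinv : s⁻¹ ∈ S := by rw [← hS]; simpa using hs
  have hsH : s ∉ H := fun h => hC.1 1 H.one_mem s h ((cayley_adj_iff hS h1).2 (by simpa))
  obtain ⟨u, -, hu⟩ := hC.2 s hsH
  have h1u := hu 1 ⟨H.one_mem, (cayley_adj_iff hS h1).2 (by simpa)⟩
  have hs2u := hu (s ^ 2) ⟨hs2, (cayley_adj_iff hS h1).2 (by simpa [pow_two])⟩
  rw [hs2u, h1u]

end Cayley

def Subgroup.LiftsInvolutions [Group G] (H : Subgroup G) : Prop :=
  ∀ g : G, g ^ 2 ∈ H → ∃ h ∈ H, (g * h) ^ 2 = 1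

section Normal

variable [Group G] {H : Subgroup G} [H.Normal]

theorem IsPerfectCode.liftsInvolutions {S : Set G} (hS : S⁻¹ = S) (h1 : (1 : G) ∉ S)
    (hC : IsPerfectCode (cayley G S) H) : H.LiftsInvolutions := by
  intro g hg2
  by_cases hg : g ∈ H
  · exact ⟨g⁻¹, H.inv_mem hg, by simp⟩
  obtain ⟨u, ⟨huH, hadj⟩, -⟩ := hC.2 g hg
  rw [SetLike.mem_coe] at huH
  set s := u * g⁻¹ with hs_def
  have hs2 : s ^ 2 ∈ H := by
    rw [← QuotientGroup.eq_one_iff] at hg2 huH ⊢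
    rw [QuotientGroup.mk_pow] at hg2
    simp [hs_def, huH, inv_pow, hg2]
  have hs1 := hC.sq_eq_one_of_sq_mem hS h1 ((cayley_adj_iff hS h1).1 hadj) hs2
  exact ⟨u⁻¹, H.inv_mem huH, by rw [← inv_inv (g * u⁻¹), inv_pow]; simpa [hs_def] using hs1⟩

theorem Subgroup.LiftsInvolutions.exists_inv_section (hH : H.LiftsInvolutions) :
    ∃ f : G ⧸ H → G, (∀ q, (f q : G ⧸ H) = q) ∧ ∀ q, f q⁻¹ = (f q)⁻¹ := by
  refine inv_involutive.exists_equivariant_section inv_involutive _ (fun _ => rfl) fun q => ?_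
  obtain ⟨g, rfl⟩ := QuotientGroup.mk_surjective q
  by_cases hq : (g : G ⧸ H)⁻¹ = g
  · have hg2 : g ^ 2 ∈ H := by
      rw [← QuotientGroup.eq_one_iff, QuotientGroup.mk_pow, pow_two]
      nth_rewrite 1 [← hq]
      exact inv_mul_cancel _
    obtain ⟨h, hh, hgh⟩ := hH g hg2
    refine ⟨g * h, ?_, fun _ => ?_⟩
    · simp [(QuotientGroup.eq_one_iff h).2 hh]
    · rwa [inv_eq_iff_mul_eq_one, ← pow_two]
  · exact ⟨g, rfl, fun h => absurd h hq⟩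

theorem isPerfectCodeOfGroup_of_inv_section (f : G ⧸ H → G) (hf : ∀ q, (f q : G ⧸ H) = q)
    (hf_inv : ∀ q, f q⁻¹ = (f q)⁻¹) : IsPerfectCodeOfGroup G H := by
  set S : Set G := {x | (x : G ⧸ H) ≠ 1 ∧ f x = x}
  have hS_inv : S ⊆ S⁻¹ := fun x ⟨hx1, hfx⟩ =>
    ⟨by simpa using hx1, by simp only [QuotientGroup.mk_inv, hf_inv, hfx]⟩
  have hS : S⁻¹ = S := (Set.inv_subset.2 hS_inv).antisymm hS_inv
  have h1 : (1 : G) ∉ S := fun h => h.1 rfl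
  refine ⟨S, hS, h1, fun u hu v hv hadj => ?_, fun v hv => ?_⟩
  · exact ((cayley_adj_iff hS h1).1 hadj).1
      ((QuotientGroup.eq_one_iff _).2 (H.mul_mem hv (H.inv_mem hu)))
  have hv1 : (v : G ⧸ H)⁻¹ ≠ 1 := inv_ne_one.2 (mt (QuotientGroup.eq_one_iff v).1 hv)
  refine ⟨f (v : G ⧸ H)⁻¹ * v, ⟨?_, ?_⟩, fun u ⟨hu, hadj⟩ => ?_⟩
  · rw [SetLike.mem_coe, ← QuotientGroup.eq_one_iff]
    simp [hf]
  · rw [cayley_adj_iff hS h1, mul_inv_cancel_right]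
    exact ⟨by rwa [hf], by rw [hf]⟩
  · rw [← mul_inv_eq_iff_eq_mul, ← ((cayley_adj_iff hS h1).1 hadj).2]
    simp [(QuotientGroup.eq_one_iff u).2 hu]

theorem isPerfectCodeOfGroup_iff_liftsInvolutions :
    IsPerfectCodeOfGroup G H ↔ H.LiftsInvolutions := by
  refine ⟨fun ⟨_, hS, h1, hC⟩ => hC.liftsInvolutions hS h1, fun hH => ?_⟩
  obtain ⟨f, hf, hf_inv⟩ := hH.exists_inv_section
  exact isPerfectCodeOfGroup_of_inv_section f hf hf_inv

end Normal

section SylowTwo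

variable [CommGroup G]

theorem IsOfFinOrder.exists_odd_pow_mem_sylowTwo {g : G} (hg : IsOfFinOrder g) :
    ∃ m, Odd m ∧ g ^ m ∈ sylowTwo G := by
  obtain ⟨k, m, hm, hkm⟩ := Nat.exists_eq_two_pow_mul_odd hg.orderOf_pos.ne'
  exact ⟨m, hm, k, by rw [← pow_mul, mul_comm, ← hkm, pow_orderOf_eq_one]⟩

theorem Subgroup.liftsInvolutions_iff_subgroupOf_sylowTwo [Finite G] (H : Subgroup G) :
    H.LiftsInvolutions ↔ (H.subgroupOf (sylowTwo G)).LiftsInvolutions := by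
  constructor
  · intro hH x hx2
    obtain ⟨h, hh, hxh⟩ := hH x (by simpa [Subgroup.mem_subgroupOf] using hx2)
    -- `h = x⁻¹ * (x * h)` is a product of `2`-elements.
    have hh2 : h ∈ sylowTwo G := by
      simpa using (sylowTwo G).mul_mem ((sylowTwo G).inv_mem x.2) ⟨1, hxh⟩
    exact ⟨⟨h, hh2⟩, hh, Subtype.ext (by simpa using hxh)⟩
  · intro hH g hg2
    obtain ⟨m, ⟨k, rfl⟩, hgm⟩ := (isOfFinOrder_of_finite g).exists_odd_pow_mem_sylowTwo
    have hgm2 : (⟨_, hgm⟩ : sylowTwo G) ^ 2 ∈ H.subgroupOf (sylowTwo G) := by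
      simpa [Subgroup.mem_subgroupOf, ← pow_mul, mul_comm] using H.pow_mem hg2 (2 * k + 1)
    obtain ⟨h, hh, hgh⟩ := hH _ hgm2
    refine ⟨(g ^ 2) ^ k * h, H.mul_mem (H.pow_mem hg2 k) hh, ?_⟩
    rw [← mul_assoc, ← pow_mul, ← pow_succ']
    simpa using congrArg Subtype.val hgh

end SylowTwo

end

theorem perfect_code_iff_sylow_two_perfect_code_general (G : Type*) [CommGroup G] [Fintype G]
    (H : Subgroup G) :
    IsPerfectCodeOfGroup G (H : Set G) ↔
      IsPerfectCodeOfGroup (sylowTwo G) ((H.subgroupOf (sylowTwo G) : Subgroup (sylowTwo G)) : Set (sylowTwo G)) := by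
  rw [isPerfectCodeOfGroup_iff_liftsInvolutions, isPerfectCodeOfGroup_iff_liftsInvolutions]
  exact H.liftsInvolutions_iff_subgroupOf_sylowTwo

/-- For a proper subgroup `H` of a finite abelian group `G`, `H` is a perfect code of
`G` iff the Sylow `2`-subgroup `H₂` of `H` is a perfect code of `G₂`. -/
theorem perfect_code_iff_sylow_two_perfect_code (G : Type*) [CommGroup G] [Fintype G]
    (H : Subgroup G) (hH : H ≠ ⊤) :
    IsPerfectCodeOfGroup G (H : Set G) ↔
      IsPerfectCodeOfGroup (sylowTwo G) ((H.subgroupOf (sylowTwo G) : Subgroup (sylowTwo G)) : Set (sylowTwo G)) :=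
  perfect_code_iff_sylow_two_perfect_code_general G H
end

section
/- Let n ≥ 2 be an integer and t a positive integer dividing 2n such that 2n/t is odd (so t is even), and let x, y be the standard generators of the generalized quaternion group Q_{4n}. Then the subgroup ⟨x^t⟩ is a perfect code in the Cayley graph Cay(Q_{4n}, S), where S = {x^n} ∪ {x^i, x^{-i} : 1 ≤ i ≤ t/2 − 1} ∪ {x^i y, x^{n+i} y : 0 ≤ i ≤ t/2 − 1}. -/
/-!
If `S` is inverse-closed with `1 ∉ S`, a set `C` is a perfect code in `Cay(G, S)` as soon as
every element of `G` factors uniquely as `s * c` with `s ∈ S ∪ {1}` and `c ∈ C`; for a subgroup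
`C` this says that `S ∪ {1}` is a left transversal of `C`.

The left cosets of `H = ⟨x^t⟩` in `Q_{4n}` are classified by whether the element is a power of
`x` or of the form `x^k y`, together with the residue of `k` mod `t`. As `2n/t` is odd, `t` is
even and `n ≡ t/2 (mod t)`. Hence the exponents `0, ±1, …, ±(t/2 - 1), n` of the powers of `x` in
`S ∪ {1}` run through every residue mod `t` exactly once, and so do the exponents `i, n + i`
(`0 ≤ i < t/2`) of the elements `x^i y, x^(n+i) y` of `S`.
-/

section Cayley

variable {G : Type*} [Group G] {S : Set G}

lemma cayley_adj_iff_s7 (hS : ∀ s ∈ S, s⁻¹ ∈ S) {u v : G} :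
    (cayley G S).Adj u v ↔ u ≠ v ∧ v * u⁻¹ ∈ S := by
  refine (SimpleGraph.fromRel_adj _ _ _).trans (and_congr_right fun _ => or_iff_left_of_imp ?_)
  intro h
  simpa using hS _ h

theorem isPerfectCode_cayley_of_isComplement {C : Set G} (hS : ∀ s ∈ S, s⁻¹ ∈ S)
    (h1 : (1 : G) ∉ S) (hC : Subgroup.IsComplement (insert 1 S) C) :
    IsPerfectCode (cayley G S) C := by
  have factor_unique {s s' c c' : G} (hs : s ∈ insert 1 S) (hs' : s' ∈ insert 1 S)
      (hc : c ∈ C) (hc' : c' ∈ C) (h : s * c = s' * c') : s = s' ∧ c = c' := by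
    simpa using hC.1 (a₁ := (⟨s, hs⟩, ⟨c, hc⟩)) (a₂ := (⟨s', hs'⟩, ⟨c', hc'⟩)) h
  refine ⟨fun u hu v hv huv => ?_, fun v hv => ?_⟩
  · rw [cayley_adj_iff_s7 hS] at huv
    have h := factor_unique (.inl rfl) (.inr huv.2) hv hu (by group)
    exact h1 (h.1 ▸ huv.2)
  · obtain ⟨⟨⟨s, hs⟩, ⟨c, hc⟩⟩, rfl⟩ := hC.2 v
    have hsS : s ∈ S := hs.resolve_left (by rintro rfl; simp_all)
    refine ⟨c, ⟨hc, (cayley_adj_iff_s7 hS).2 ⟨fun h => h1 (mul_eq_right.1 h ▸ hsS), ?_⟩⟩, ?_⟩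
    · simpa using hS _ hsS
    · rintro u ⟨hu, huv⟩
      rw [cayley_adj_iff_s7 hS] at huv
      exact (factor_unique (.inr (by simpa using hS _ huv.2)) (.inr hsS) hu hc (by group)).2

end Cayley

theorem Subgroup.isComplement_range_of_leftInverse {G β : Type*} [Group G] {H : Subgroup G}
    {κ : G → β} {σ : β → G} (hσ : Function.LeftInverse κ σ)
    (hκ : ∀ g g', κ g = κ g' ↔ g⁻¹ * g' ∈ H) : IsComplement (Set.range σ) H := by
  refine isComplement_iff_existsUnique_inv_mul_mem.2 fun g => ?_
  refine ⟨⟨σ (κ g), Set.mem_range_self _⟩, (hκ _ _).1 (hσ _), ?_⟩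
  rintro ⟨_, b, rfl⟩ h
  exact Subtype.ext (congrArg σ ((hσ b).symm.trans ((hκ _ _).2 h)))

lemma Nat.even_of_odd_two_mul_div {n t : ℕ} (hdvd : t ∣ 2 * n) (hodd : Odd (2 * n / t)) :
    Even t := by
  have h : Even (t * (2 * n / t)) := by rw [Nat.mul_div_cancel' hdvd]; exact even_two_mul n
  exact (Nat.even_mul.1 h).resolve_right (Nat.not_even_iff_odd.2 hodd)

lemma Nat.mod_eq_half_of_odd_two_mul_div {n t : ℕ} (hdvd : t ∣ 2 * n)
    (hodd : Odd (2 * n / t)) : n % t = t / 2 := by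
  obtain ⟨T, hT⟩ := Nat.even_of_odd_two_mul_div hdvd hodd
  obtain ⟨r, hr⟩ := hodd
  have hT0 : T ≠ 0 := by rintro rfl; simp [hT] at hr
  have hn : n = t * r + T := by
    have : 2 * n = t * (2 * r + 1) := by rw [← hr, Nat.mul_div_cancel' hdvd]
    subst hT
    linarith
  rw [hn, Nat.mul_add_mod, Nat.mod_eq_of_lt (by omega)]
  omega

lemma ZMod.neg_natCast_eq_self (n : ℕ) : -(n : ZMod (2 * n)) = n := by
  refine (eq_neg_of_add_eq_zero_left ?_).symm
  rw [← two_mul]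
  exact_mod_cast ZMod.natCast_self (2 * n)

namespace QuaternionGroup

variable {n t : ℕ}

lemma inv_a (i : ZMod (2 * n)) : (a i)⁻¹ = a (-i) := rfl

lemma inv_xa (i : ZMod (2 * n)) : (xa i)⁻¹ = xa ((n : ZMod (2 * n)) + i) := rfl

lemma a_eq_one_iff {i : ZMod (2 * n)} : a i = 1 ↔ i = 0 := by
  rw [one_def, a.injEq]

lemma xa_ne_one (i : ZMod (2 * n)) : xa i ≠ 1 := by
  rw [one_def]
  exact nofun

lemma mem_zpowers_a_natCast_iff [NeZero n] {g : QuaternionGroup n} :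
    g ∈ Subgroup.zpowers (a t) ↔ ∃ k : ℕ, a (t * k : ℕ) = g := by
  rw [← a_one_pow, ← mem_powers_iff_mem_zpowers, Submonoid.mem_powers_iff]
  simp_rw [← pow_mul, a_one_pow]

lemma xa_notMem_zpowers_a_natCast [NeZero n] (i : ZMod (2 * n)) :
    xa i ∉ Subgroup.zpowers (a t) := by
  simp [mem_zpowers_a_natCast_iff]

lemma a_mem_zpowers_a_natCast_iff [NeZero n] (hdvd : t ∣ 2 * n) (i : ZMod (2 * n)) :
    a i ∈ Subgroup.zpowers (a t) ↔ (i.cast : ZMod t) = 0 := by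
  simp only [mem_zpowers_a_natCast_iff, a.injEq]
  constructor
  · rintro ⟨k, rfl⟩
    rw [ZMod.cast_natCast hdvd, Nat.cast_mul, ZMod.natCast_self, zero_mul]
  · intro hi
    rw [ZMod.cast_eq_val, ZMod.natCast_eq_zero_iff] at hi
    exact ⟨i.val / t, by rw [Nat.mul_div_cancel' hi, ZMod.natCast_zmod_val]⟩

def cosetIndex (t : ℕ) : QuaternionGroup n → ZMod t ⊕ ZMod t
  | a i => .inl i.cast
  | xa i => .inr (-i.cast)

lemma cosetIndex_eq_iff [NeZero n] (hdvd : t ∣ 2 * n) (g g' : QuaternionGroup n) :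
    cosetIndex t g = cosetIndex t g' ↔ g⁻¹ * g' ∈ Subgroup.zpowers (a t) := by
  rcases g with i | i <;> rcases g' with j | j
  · rw [inv_a, a_mul_a, neg_add_eq_sub, a_mem_zpowers_a_natCast_iff hdvd, ZMod.cast_sub hdvd,
      sub_eq_zero, eq_comm]
    exact Sum.inl_injective.eq_iff
  · simp [cosetIndex, inv_a, a_mul_xa, xa_notMem_zpowers_a_natCast]
  · simp [cosetIndex, inv_xa, xa_mul_a, xa_notMem_zpowers_a_natCast]
  · rw [inv_xa, xa_mul_xa, add_sub_add_left_eq_sub, a_mem_zpowers_a_natCast_iff hdvd,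
      ZMod.cast_sub hdvd, sub_eq_zero, eq_comm]
    exact Sum.inr_injective.eq_iff.trans neg_inj

/-- The exponent of the power of `x` in `S ∪ {1}` lying in the residue class `r` mod `t`. -/
def aRep (n t : ℕ) (r : ZMod t) : ZMod (2 * n) :=
  if r.valMinAbs = (t / 2 : ℕ) then n else r.valMinAbs

/-- `x^i y = xa (-i)`: the index of the element `x^i y` or `x^(n+i) y` of `S` whose exponent
lies in the residue class `r` mod `t`. -/
def xaRep (n t : ℕ) (r : ZMod t) : ZMod (2 * n) :=
  -(if r.val < t / 2 then r.val else (n + (r.val - t / 2) : ℕ))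

lemma cast_aRep (hdvd : t ∣ 2 * n) (hmod : n % t = t / 2) (r : ZMod t) :
    ((aRep n t r).cast : ZMod t) = r := by
  unfold aRep
  split_ifs with h
  · rw [ZMod.cast_natCast hdvd, ← ZMod.natCast_mod, hmod, ← Int.cast_natCast, ← h,
      ZMod.coe_valMinAbs]
  · rw [ZMod.cast_intCast hdvd, ZMod.coe_valMinAbs]

lemma cast_xaRep [NeZero t] (hdvd : t ∣ 2 * n) (hmod : n % t = t / 2) (r : ZMod t) :
    ((xaRep n t r).cast : ZMod t) = -r := by
  unfold xaRep
  rw [ZMod.cast_neg hdvd, neg_inj]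
  split_ifs with h
  · rw [ZMod.cast_natCast hdvd, ZMod.natCast_zmod_val]
  · rw [ZMod.cast_natCast hdvd, Nat.cast_add, ← ZMod.natCast_mod n, hmod, ← Nat.cast_add,
      Nat.add_sub_cancel' (not_lt.1 h), ZMod.natCast_zmod_val]

lemma aRep_intCast [NeZero t] {k : ℤ} (hk : |k| < (t / 2 : ℕ)) : aRep n t k = k := by
  rw [abs_lt] at hk
  rw [aRep, (ZMod.valMinAbs_spec _ k).2 ⟨rfl, by constructor <;> omega⟩, if_neg (by omega)]

lemma aRep_half : aRep n t (t / 2 : ℕ) = n := by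
  rw [aRep, ZMod.valMinAbs_natCast_of_le_half le_rfl, if_pos rfl]

lemma mem_range_aRep [NeZero t] (ht : Even t) (d : ZMod (2 * n)) :
    d ∈ Set.range (aRep n t) ↔
      d = 0 ∨ d = n ∨ ∃ i : ℕ, 1 ≤ i ∧ i ≤ t / 2 - 1 ∧ (d = i ∨ d = -i) := by
  have hT : t / 2 * 2 = t := Nat.div_two_mul_two_of_even ht
  have hT0 : 0 < t / 2 := by have := NeZero.pos t; omega
  constructor
  · rintro ⟨r, rfl⟩
    by_cases h : r.valMinAbs = (t / 2 : ℕ)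
    · exact .inr (.inl (if_pos h))
    obtain ⟨hk1, hk2⟩ := r.valMinAbs_mem_Ioc
    rw [aRep, if_neg h]
    generalize r.valMinAbs = k at h hk1 hk2
    obtain ⟨i, rfl | rfl⟩ := Int.eq_nat_or_neg k <;> obtain rfl | hi := Nat.eq_zero_or_pos i
    · simp
    · exact .inr (.inr ⟨i, hi, by omega, by simp⟩)
    · simp
    · exact .inr (.inr ⟨i, hi, by omega, by simp⟩)
  · rintro (rfl | rfl | ⟨i, hi1, hi2, rfl | rfl⟩)
    · exact ⟨_, by simpa using aRep_intCast (n := n) (t := t) (k := 0) (by simp; omega)⟩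
    · exact ⟨_, aRep_half⟩
    · exact ⟨_, by simpa using aRep_intCast (n := n) (t := t) (k := i) (by simp; omega)⟩
    · exact ⟨_, by simpa using aRep_intCast (n := n) (t := t) (k := -i) (by simp; omega)⟩

lemma xaRep_natCast {i : ℕ} (hi : i < t / 2) : xaRep n t i = -i := by
  rw [xaRep, ZMod.val_natCast_of_lt (by omega), if_pos hi]

lemma xaRep_half_add (ht : Even t) {i : ℕ} (hi : i < t / 2) :
    xaRep n t (t / 2 + i : ℕ) = -(n + i) := by
  have hT : t / 2 * 2 = t := Nat.div_two_mul_two_of_even ht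
  rw [xaRep, ZMod.val_natCast_of_lt (by omega), if_neg (by omega), Nat.add_sub_cancel_left,
    Nat.cast_add]

lemma mem_range_xaRep [NeZero t] (ht : Even t) (e : ZMod (2 * n)) :
    e ∈ Set.range (xaRep n t) ↔ ∃ i : ℕ, i ≤ t / 2 - 1 ∧ (e = -i ∨ e = -(n + i)) := by
  have hT : t / 2 * 2 = t := Nat.div_two_mul_two_of_even ht
  have hT0 : 0 < t / 2 := by have := NeZero.pos t; omega
  constructor
  · rintro ⟨r, rfl⟩
    have hr := r.val_lt
    unfold xaRep
    split_ifs with h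
    · exact ⟨r.val, by omega, .inl rfl⟩
    · exact ⟨r.val - t / 2, by omega, .inr (by push_cast; rfl)⟩
  · rintro ⟨i, hi, rfl | rfl⟩
    · exact ⟨_, xaRep_natCast (by omega)⟩
    · exact ⟨_, xaRep_half_add ht (by omega)⟩

def transversal (n t : ℕ) : ZMod t ⊕ ZMod t → QuaternionGroup n :=
  Sum.elim (a ∘ aRep n t) (xa ∘ xaRep n t)

lemma leftInverse_cosetIndex_transversal [NeZero t] (hdvd : t ∣ 2 * n)
    (hmod : n % t = t / 2) : Function.LeftInverse (cosetIndex t) (transversal n t) := by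
  rintro (r | r) <;> simp [cosetIndex, transversal, cast_aRep hdvd hmod, cast_xaRep hdvd hmod]

/-- The set `S` of the theorem, with `x = a 1` and `y = xa 0`. -/
def connectionSet (n t : ℕ) : Set (QuaternionGroup n) :=
  {a 1 ^ n} ∪
    {g | ∃ i : ℕ, 1 ≤ i ∧ i ≤ t / 2 - 1 ∧ (g = a 1 ^ i ∨ g = (a 1 ^ i)⁻¹)} ∪
    {g | ∃ i : ℕ, i ≤ t / 2 - 1 ∧ (g = a 1 ^ i * xa 0 ∨ g = a 1 ^ (n + i) * xa 0)}

lemma a_mem_connectionSet (d : ZMod (2 * n)) :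
    a d ∈ connectionSet n t ↔ d = n ∨ ∃ i : ℕ, 1 ≤ i ∧ i ≤ t / 2 - 1 ∧ (d = i ∨ d = -i) := by
  simp [connectionSet, inv_a]

lemma xa_mem_connectionSet (e : ZMod (2 * n)) :
    xa e ∈ connectionSet n t ↔ ∃ i : ℕ, i ≤ t / 2 - 1 ∧ (e = -i ∨ e = -(n + i)) := by
  simp [connectionSet, inv_a, a_mul_xa, add_comm]

lemma inv_mem_connectionSet : ∀ s ∈ connectionSet n t, s⁻¹ ∈ connectionSet n t := by
  rintro (d | e) hs
  · rw [a_mem_connectionSet] at hs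
    rw [inv_a, a_mem_connectionSet]
    rcases hs with rfl | ⟨i, hi1, hi2, rfl | rfl⟩
    · exact .inl (ZMod.neg_natCast_eq_self n)
    · exact .inr ⟨i, hi1, hi2, .inr rfl⟩
    · exact .inr ⟨i, hi1, hi2, .inl (neg_neg _)⟩
  · rw [xa_mem_connectionSet] at hs
    rw [inv_xa, xa_mem_connectionSet]
    obtain ⟨i, hi, rfl | rfl⟩ := hs
    · exact ⟨i, hi, .inr (by rw [neg_add, ZMod.neg_natCast_eq_self])⟩
    · exact ⟨i, hi, .inl (by rw [neg_add, add_neg_cancel_left])⟩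

lemma one_notMem_connectionSet (hn : 0 < n) (ht : t ≤ 2 * n) : 1 ∉ connectionSet n t := by
  have hne (i : ℕ) (hi0 : 0 < i) (hi : i < 2 * n) : (i : ZMod (2 * n)) ≠ 0 := fun h =>
    Nat.not_dvd_of_pos_of_lt hi0 hi ((ZMod.natCast_eq_zero_iff _ _).1 h)
  rw [one_def, a_mem_connectionSet]
  rintro (h | ⟨i, hi1, hi2, h | h⟩)
  · exact hne n hn (by omega) h.symm
  · exact hne i hi1 (by omega) h.symm
  · exact hne i hi1 (by omega) (neg_eq_zero.1 h.symm)

lemma insert_one_connectionSet_eq_range [NeZero t] (ht : Even t) :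
    insert 1 (connectionSet n t) = Set.range (transversal n t) := by
  ext (d | e)
  · simp [transversal, Set.range_comp, a_eq_one_iff, a_mem_connectionSet, mem_range_aRep ht]
  · simp [transversal, Set.range_comp, xa_ne_one, xa_mem_connectionSet, mem_range_xaRep ht]

theorem isComplement_insert_one_connectionSet [NeZero n] [NeZero t] (hdvd : t ∣ 2 * n)
    (hodd : Odd (2 * n / t)) :
    Subgroup.IsComplement (insert 1 (connectionSet n t))
      (Subgroup.zpowers (a (t : ZMod (2 * n))) : Set (QuaternionGroup n)) := by
  rw [insert_one_connectionSet_eq_range (Nat.even_of_odd_two_mul_div hdvd hodd)]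
  exact Subgroup.isComplement_range_of_leftInverse
    (leftInverse_cosetIndex_transversal hdvd (Nat.mod_eq_half_of_odd_two_mul_div hdvd hodd))
    (cosetIndex_eq_iff hdvd)

end QuaternionGroup

/-- In `Q_{4n}` (`n ≥ 2`), if `t ∣ 2n` and `2n/t` is odd, then `⟨x^t⟩` is a perfect
code in `Cay(Q_{4n}, S)` where
`S = {x^n} ∪ {x^i, x^{-i} : 1 ≤ i ≤ t/2 - 1} ∪ {x^i y, x^{n+i} y : 0 ≤ i ≤ t/2 - 1}`. -/
theorem quaternion_cyclic_subgroup_perfect_code_explicit (n : ℕ) (hn : 2 ≤ n)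
    (t : ℕ) (ht : 0 < t) (htdvd : t ∣ 2 * n) (hodd : Odd (2 * n / t)) :
    letI x : QuaternionGroup n := QuaternionGroup.a (1 : ZMod (2 * n))
    letI y : QuaternionGroup n := QuaternionGroup.xa (0 : ZMod (2 * n))
    letI S : Set (QuaternionGroup n) :=
      {x ^ n} ∪
      {g | ∃ i : ℕ, 1 ≤ i ∧ i ≤ t / 2 - 1 ∧ (g = x ^ i ∨ g = (x ^ i)⁻¹)} ∪
      {g | ∃ i : ℕ, i ≤ t / 2 - 1 ∧ (g = x ^ i * y ∨ g = x ^ (n + i) * y)}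
    IsPerfectCode (cayley (QuaternionGroup n) S)
      ((Subgroup.zpowers (x ^ t)) : Set (QuaternionGroup n)) := by
  have : NeZero n := ⟨by omega⟩
  have : NeZero t := ⟨ht.ne'⟩
  refine isPerfectCode_cayley_of_isComplement QuaternionGroup.inv_mem_connectionSet
    (QuaternionGroup.one_notMem_connectionSet (by omega) (Nat.le_of_dvd (by omega) htdvd)) ?_
  rw [QuaternionGroup.a_one_pow t]
  exact QuaternionGroup.isComplement_insert_one_connectionSet htdvd hodd
end

section
/- Let G be a finite abelian group and H a subgroup of G. Then H is a perfect code of G if and only if H is a 2-pure subgroup of G, i.e. G² ∩ H = H². -/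
section Aux

variable {G : Type*} [CommGroup G]

/-- Adjacency in a Cayley graph with inverse-closed connection set. -/
lemma cayley_adj {S : Set G} (hS : S⁻¹ = S) (x y : G) :
    (cayley G S).Adj x y ↔ x ≠ y ∧ y * x⁻¹ ∈ S := by
  have hmem : ∀ a b : G, a * b⁻¹ ∈ S → b * a⁻¹ ∈ S := by
    intro a b h
    rw [← hS, Set.mem_inv]
    have : (b * a⁻¹)⁻¹ = a * b⁻¹ := by group
    rw [this]; exact h
  rw [cayley, SimpleGraph.fromRel_adj]
  constructor
  · rintro ⟨hne, h | h⟩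
    · exact ⟨hne, h⟩
    · exact ⟨hne, hmem _ _ h⟩
  · rintro ⟨hne, h⟩
    exact ⟨hne, Or.inl h⟩

lemma mk_out_coe {H : Subgroup G} (q : G ⧸ H) : ((q.out : G) : G ⧸ H) = q := q.out_eq'

lemma forward_dir {H : Subgroup G} (hpc : IsPerfectCodeOfGroup G (H : Set G)) :
    Set.range (fun g : G => g ^ 2) ∩ (H : Set G) = (fun g : G => g ^ 2) '' (H : Set G) := by
  obtain ⟨S, hS, h1S, hind, hcov⟩ := hpc
  apply Set.Subset.antisymm
  · rintro x ⟨⟨g, rfl⟩, hgH⟩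
    simp only [SetLike.mem_coe] at hgH
    by_cases hg : g ∈ H
    · exact ⟨g, hg, rfl⟩
    · obtain ⟨h, ⟨hhH, hadj⟩, _⟩ := hcov g hg
      rw [cayley_adj hS] at hadj
      obtain ⟨hne, hs⟩ := hadj
      have hsinv : g * h⁻¹ ∈ S := by
        rw [← hS, Set.mem_inv]
        have : (g * h⁻¹)⁻¹ = h * g⁻¹ := by group
        rw [this]; exact hs
      have hhH' : h ∈ H := hhH
      have hginv : g⁻¹ ∉ H := fun hc => hg (by simpa using H.inv_mem hc)
      obtain ⟨u, _, huniq⟩ := hcov g⁻¹ hginv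
      -- candidate 1 : h⁻¹
      have e1 : h⁻¹ ∈ (H : Set G) ∧ (cayley G S).Adj g⁻¹ h⁻¹ := by
        refine ⟨H.inv_mem hhH', ?_⟩
        rw [cayley_adj hS]
        constructor
        · intro hc
          exact hg (by rw [inv_inj] at hc; rw [hc]; exact hhH')
        · have : h⁻¹ * (g⁻¹)⁻¹ = g * h⁻¹ := by rw [inv_inv, mul_comm]
          rw [this]; exact hsinv
      -- candidate 2 : h * g⁻¹ * g⁻¹
      have hg2inv : g⁻¹ * g⁻¹ ∈ H := by
        have : g⁻¹ * g⁻¹ = (g ^ 2)⁻¹ := by group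
        rw [this]; exact H.inv_mem hgH
      have e2 : h * g⁻¹ * g⁻¹ ∈ (H : Set G) ∧ (cayley G S).Adj g⁻¹ (h * g⁻¹ * g⁻¹) := by
        refine ⟨by simpa [mul_assoc] using H.mul_mem hhH' hg2inv, ?_⟩
        rw [cayley_adj hS]
        constructor
        · intro hc
          apply hg
          have e : h * g⁻¹ = 1 := by
            have : h * g⁻¹ = (h * g⁻¹ * g⁻¹) * g := by group
            rw [this, ← hc, inv_mul_cancel]
          have : h = g := mul_inv_eq_one.mp e
          rw [← this]; exact hhH'
        · have : h * g⁻¹ * g⁻¹ * (g⁻¹)⁻¹ = h * g⁻¹ := by group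
          rw [this]; exact hs
      have k1 := huniq _ e1
      have k2 := huniq _ e2
      have key : h⁻¹ = h * g⁻¹ * g⁻¹ := by rw [k1, k2]
      refine ⟨h, hhH', ?_⟩
      show h ^ 2 = g ^ 2
      have e : h * h * (g * g)⁻¹ = 1 := by
        have : h * h * (g * g)⁻¹ = h * (h * g⁻¹ * g⁻¹) := by group
        rw [this, ← key, mul_inv_cancel]
      have : h * h = g * g := mul_inv_eq_one.mp e
      rw [pow_two, pow_two, this]
  · rintro x ⟨h, hh, rfl⟩
    exact ⟨⟨h, rfl⟩, by simpa using pow_mem hh 2⟩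

lemma exists_invol {H : Subgroup G}
    (hpure : Set.range (fun g : G => g ^ 2) ∩ (H : Set G) = (fun g : G => g ^ 2) '' (H : Set G))
    (q : G ⧸ H) (hq : q = q⁻¹) : ∃ t : G, ((t : G ⧸ H) = q ∧ t ^ 2 = 1) := by
  have hq2 : (q.out) ^ 2 ∈ H := by
    rw [← QuotientGroup.eq_one_iff]
    show ((q.out : G) : G ⧸ H) ^ 2 = 1
    rw [mk_out_coe q, pow_two]
    nth_rewrite 2 [hq]
    exact mul_inv_cancel q
  have : (q.out) ^ 2 ∈ (fun g : G => g ^ 2) '' (H : Set G) := by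
    rw [← hpure]; exact ⟨⟨q.out, rfl⟩, hq2⟩
  obtain ⟨h, hhH, hh2⟩ := this
  simp only at hh2
  refine ⟨q.out * h⁻¹, ?_, ?_⟩
  · have h1 : ((h : G) : G ⧸ H) = 1 := (QuotientGroup.eq_one_iff h).mpr hhH
    show ((q.out : G) : G ⧸ H) * ((h : G) : G ⧸ H)⁻¹ = q
    rw [h1, inv_one, mul_one, mk_out_coe q]
  · have : (q.out * h⁻¹) ^ 2 = q.out ^ 2 * (h ^ 2)⁻¹ := by
      rw [mul_pow, inv_pow]
    rw [this, hh2, mul_inv_cancel]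

lemma backward_dir {H : Subgroup G}
    (hpure : Set.range (fun g : G => g ^ 2) ∩ (H : Set G) = (fun g : G => g ^ 2) '' (H : Set G)) :
    IsPerfectCodeOfGroup G (H : Set G) := by
  classical
  letI : LinearOrder (G ⧸ H) := IsWellOrder.linearOrder WellOrderingRel
  set f : (G ⧸ H) → G := fun q =>
    if h : q = q⁻¹ then (exists_invol hpure q h).choose
    else if q < q⁻¹ then q.out else (q⁻¹).out⁻¹ with hfdef
  have hmkf : ∀ q : G ⧸ H, ((f q : G) : G ⧸ H) = q := by
    intro q
    by_cases h : q = q⁻¹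
    · simp only [hfdef, dif_pos h]
      exact (exists_invol hpure q h).choose_spec.1
    · simp only [hfdef, dif_neg h]
      by_cases h2 : q < q⁻¹
      · rw [if_pos h2]; exact mk_out_coe q
      · rw [if_neg h2]
        show (((q⁻¹).out : G) : G ⧸ H)⁻¹ = q
        rw [mk_out_coe (q⁻¹), inv_inv]
  have hfinv : ∀ q : G ⧸ H, f q⁻¹ = (f q)⁻¹ := by
    intro q
    by_cases h : q = q⁻¹
    · rw [← h]
      have hsq := (exists_invol hpure q h).choose_spec.2
      have hfq : f q = (exists_invol hpure q h).choose := by simp only [hfdef, dif_pos h]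
      rw [hfq]
      exact eq_inv_of_mul_eq_one_left (by rw [← pow_two]; exact hsq)
    · have h' : ¬ (q⁻¹ = (q⁻¹)⁻¹) := by
        rw [inv_inv]; intro hc; exact h hc.symm
      by_cases h2 : q < q⁻¹
      · simp only [hfdef, dif_neg h, dif_neg h', if_pos h2, inv_inv]
        rw [if_neg (lt_asymm h2)]
      · have h2a : q⁻¹ < q := lt_of_le_of_ne (not_lt.mp h2) (fun hc => h hc.symm)
        simp only [hfdef, dif_neg h, dif_neg h', if_neg h2, inv_inv]
        rw [if_pos h2a]
  set S : Set G := f '' {q : G ⧸ H | q ≠ 1} with hSdef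
  have hfmemS : ∀ q : G ⧸ H, q ≠ 1 → f q ∈ S := fun q hq => ⟨q, hq, rfl⟩
  have hclosed : ∀ x ∈ S, x⁻¹ ∈ S := by
    rintro x ⟨q, hq, rfl⟩
    rw [← hfinv]
    exact hfmemS _ (inv_ne_one.mpr hq)
  have hSinv : S⁻¹ = S := by
    ext x
    rw [Set.mem_inv]
    constructor
    · intro h; simpa using hclosed _ h
    · intro h; exact hclosed _ h
  have h1S : (1 : G) ∉ S := by
    rintro ⟨q, hq, hfq⟩
    exact hq (by rw [← hmkf q, hfq]; rfl)
  refine ⟨S, hSinv, h1S, ?_, ?_⟩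
  · -- independence
    intro u hu v hv hadj
    rw [cayley_adj hSinv] at hadj
    obtain ⟨hne, hmem⟩ := hadj
    obtain ⟨q, hq, hfq⟩ := hmem
    apply hq
    rw [← hmkf q, hfq]
    show ((v : G) : G ⧸ H) * ((u : G) : G ⧸ H)⁻¹ = 1
    rw [(QuotientGroup.eq_one_iff v).mpr hv, (QuotientGroup.eq_one_iff u).mpr hu,
      inv_one, mul_one]
  · -- covering
    intro v hv
    have hq : ((v : G) : G ⧸ H) ≠ 1 := fun hc => hv ((QuotientGroup.eq_one_iff v).mp hc)
    set q : G ⧸ H := ((v : G) : G ⧸ H) with hqdef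
    have hfq1 : f q ≠ 1 := fun hc => hq (by rw [← hmkf q, hc]; rfl)
    refine ⟨v * (f q)⁻¹, ⟨?_, ?_⟩, ?_⟩
    · show v * (f q)⁻¹ ∈ (H : Set G)
      rw [SetLike.mem_coe, ← QuotientGroup.eq_one_iff]
      show ((v : G) : G ⧸ H) * ((f q : G) : G ⧸ H)⁻¹ = 1
      rw [hmkf q, ← hqdef, mul_inv_cancel]
    · rw [cayley_adj hSinv]
      constructor
      · intro hc
        apply hfq1
        nth_rewrite 1 [← mul_one v] at hc
        exact inv_eq_one.mp (mul_left_cancel hc).symm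
      · have : v * (f q)⁻¹ * v⁻¹ = (f q)⁻¹ := by
          rw [mul_comm v, mul_assoc, mul_inv_cancel, mul_one]
        rw [this, ← hfinv]
        exact hfmemS _ (inv_ne_one.mpr hq)
    · rintro y ⟨hyH, hadj⟩
      rw [cayley_adj hSinv] at hadj
      obtain ⟨hne, hmem⟩ := hadj
      obtain ⟨p, hp, hfp⟩ := hmem
      have hpq : p = q⁻¹ := by
        rw [← hmkf p, hfp]
        show ((y : G) : G ⧸ H) * ((v : G) : G ⧸ H)⁻¹ = q⁻¹
        rw [(QuotientGroup.eq_one_iff y).mpr hyH, one_mul, hqdef]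
      have hyv : y * v⁻¹ = (f q)⁻¹ := by rw [← hfp, hpq, hfinv]
      have hy : y = (f q)⁻¹ * v := by
        rw [← hyv, mul_assoc, inv_mul_cancel, mul_one]
      rw [hy, mul_comm]

end Aux

/-- A subgroup `H` of a finite abelian group `G` is a perfect code of `G` iff `H` is a
2-pure subgroup of `G`, i.e. `G² ∩ H = H²`. -/
theorem abelian_perfect_code_iff_two_pure (G : Type*) [CommGroup G] [Fintype G]
    (H : Subgroup G) :
    IsPerfectCodeOfGroup G (H : Set G) ↔
      Set.range (fun g : G => g ^ 2) ∩ (H : Set G) = (fun g : G => g ^ 2) '' (H : Set G) := by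
  constructor
  · exact forward_dir
  · exact backward_dir
end
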